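/- Let V be a finite-dimensional real vector space, let ℓ : V → ℝ be a nonzero linear functional, and let Q : V → ℝ be a quadratic form which is not equal to c·ℓ² for any real constant c. Suppose C, C' : ℕ × ℕ → ℝ are two finitely supported families of real numbers such that Σ_{(a,b)} C_{a,b}·ℓ(h)^a·Q(h)^b = Σ_{(a,b)} C'_{a,b}·ℓ(h)^a·Q(h)^b for every h ∈ V. Then C_{a,b} = C'_{a,b} for all (a,b). -/
import Mathlib

open Polynomial

/-- Coefficients of a finitely supported expansion in powers `ℓ(h)^a · Q(h)^b`
are uniquely determined, when `ℓ` is a nonzero linear functional and `Q` is a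
quadratic form that is not a constant multiple of `ℓ²`. -/
theorem coefficients_unique_in_ell_Q_expansion
    (V : Type*) [AddCommGroup V] [Module ℝ V] [FiniteDimensional ℝ V]
    (ℓ : V →ₗ[ℝ] ℝ) (hℓ : ℓ ≠ 0)
    (Q : QuadraticForm ℝ V)
    (hQ : ∀ c : ℝ, ¬ (∀ h : V, Q h = c * (ℓ h) ^ 2))
    (C C' : (ℕ × ℕ) →₀ ℝ)
    (hCC' : ∀ h : V,
      (C.sum fun ab c => c * (ℓ h) ^ ab.1 * (Q h) ^ ab.2) =
      (C'.sum fun ab c => c * (ℓ h) ^ ab.1 * (Q h) ^ ab.2)) :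
    C = C' := by
  set D : (ℕ × ℕ) →₀ ℝ := C - C' with hDdef
  suffices hD0 : D = 0 by
    ext ab
    have := DFunLike.congr_fun hD0 ab
    simpa [hDdef, sub_eq_zero] using this
  have hD : ∀ h : V, (D.sum fun ab c => c * (ℓ h) ^ ab.1 * (Q h) ^ ab.2) = 0 := by
    intro h
    rw [hDdef, Finsupp.sum_sub_index (by intro a b₁ b₂; ring)]
    rw [hCC' h, sub_self]
  obtain ⟨h₁, hh₁⟩ : ∃ h₁, ℓ h₁ ≠ 0 := by
    by_contra hc
    push_neg at hc
    exact hℓ (by ext x; simp [hc x])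
  obtain ⟨e, hℓe⟩ : ∃ e : V, ℓ e = 1 :=
    ⟨(ℓ h₁)⁻¹ • h₁, by simp [inv_mul_cancel₀ hh₁]⟩
  obtain ⟨k, hℓk, hk⟩ : ∃ k, ℓ k = 0 ∧ (QuadraticMap.polar Q e k ≠ 0 ∨ Q k ≠ 0) := by
    by_contra hc
    push_neg at hc
    refine hQ (Q e) ?_
    intro h
    set k := h - ℓ h • e with hkdef
    have hℓk : ℓ k = 0 := by simp [hkdef, hℓe]
    have h1 := (hc k hℓk).1
    have h2 := (hc k hℓk).2
    have hh : h = ℓ h • e + k := by simp [hkdef]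
    calc Q h = Q (ℓ h • e + k) := by rw [← hh]
    _ = Q (ℓ h • e) + Q k + QuadraticMap.polar Q (ℓ h • e) k := by
        simp [QuadraticMap.polar]
    _ = Q e * ℓ h ^ 2 := by
        rw [QuadraticMap.polar_smul_left, QuadraticMap.map_smul, h1, h2]
        simp
        ring
  set P : Polynomial (Polynomial ℝ) :=
    ∑ ab ∈ D.support, Polynomial.C (Polynomial.C (D ab) * Polynomial.X ^ ab.1) * Polynomial.X ^ ab.2 with hP
  have hQeval : ∀ t s : ℝ, Q (t • e + s • k)
      = (Q k) * s ^ 2 + (t * QuadraticMap.polar Q e k) * s + t ^ 2 * Q e := by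
    intro t s
    have h3 : Q (t • e + s • k) = Q (t • e) + Q (s • k) + QuadraticMap.polar Q (t • e) (s • k) := by
      simp [QuadraticMap.polar]
    rw [h3, QuadraticMap.map_smul, QuadraticMap.map_smul,
      QuadraticMap.polar_smul_left, QuadraticMap.polar_smul_right]
    simp only [smul_eq_mul]
    ring
  have hPeval : ∀ t y : ℝ, ((P.map (Polynomial.evalRingHom t)).eval y)
      = D.sum fun ab c => c * t ^ ab.1 * y ^ ab.2 := by
    intro t y
    rw [Finsupp.sum, hP, Polynomial.map_sum, Polynomial.eval_finset_sum]
    apply Finset.sum_congr rfl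
    intro ab _
    simp only [Polynomial.map_mul, Polynomial.map_pow, Polynomial.map_C, Polynomial.map_X,
      Polynomial.eval_mul, Polynomial.eval_pow, Polynomial.eval_C, Polynomial.eval_X,
      Polynomial.coe_evalRingHom, Polynomial.eval_mul, Polynomial.eval_pow]
  have hPt : ∀ t : ℝ, t ≠ 0 → P.map (Polynomial.evalRingHom t) = 0 := by
    intro t ht
    set g : Polynomial ℝ := Polynomial.C (Q k) * Polynomial.X ^ 2
        + Polynomial.C (t * QuadraticMap.polar Q e k) * Polynomial.X
        + Polynomial.C (t ^ 2 * Q e) with hg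
    have hg1 : g.coeff 1 = t * QuadraticMap.polar Q e k := by
      rw [hg]
      simp only [Polynomial.coeff_add, Polynomial.coeff_C_mul, Polynomial.coeff_X_pow,
        Polynomial.coeff_X, Polynomial.coeff_C]
      norm_num
    have hg2 : g.coeff 2 = Q k := by
      rw [hg]
      simp only [Polynomial.coeff_add, Polynomial.coeff_C_mul, Polynomial.coeff_X_pow,
        Polynomial.coeff_X, Polynomial.coeff_C]
      norm_num
    have hcomp : (P.map (Polynomial.evalRingHom t)).comp g = 0 := by
      apply Polynomial.funext
      intro s
      rw [Polynomial.eval_comp]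
      have hgs : g.eval s = Q (t • e + s • k) := by rw [hQeval]; simp [hg]
      rw [hgs, hPeval, Polynomial.eval_zero]
      have h4 := hD (t • e + s • k)
      have hℓh : ℓ (t • e + s • k) = t := by simp [hℓe, hℓk]
      rwa [hℓh] at h4
    rcases (Polynomial.comp_eq_zero_iff).1 hcomp with h | ⟨_, hgc⟩
    · exact h
    · exfalso
      rcases hk with hpol | hQk
      · have h5 : g.coeff 1 = 0 := by rw [hgc]; simp [Polynomial.coeff_C]
        rw [hg1] at h5
        rcases mul_eq_zero.1 h5 with h | h
        · exact ht h
        · exact hpol h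
      · have h5 : g.coeff 2 = 0 := by rw [hgc]; simp [Polynomial.coeff_C]
        rw [hg2] at h5
        exact hQk h5
  have hPcoeff : ∀ b : ℕ, P.coeff b = 0 := by
    intro b
    apply Polynomial.eq_zero_of_infinite_isRoot
    apply Set.Infinite.mono (s := {x : ℝ | x ≠ 0})
    · intro t ht
      have h6 := hPt t ht
      have h2 : (P.map (Polynomial.evalRingHom t)).coeff b = 0 := by rw [h6]; simp
      rw [Polynomial.coeff_map] at h2
      exact h2
    · exact Set.infinite_of_finite_compl (by simp)
  have hP0 : P = 0 := Polynomial.ext fun b => by rw [hPcoeff b]; simp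
  ext ab
  obtain ⟨a, b⟩ := ab
  have h1 : (P.coeff b).coeff a = D (a, b) := by
    rw [hP]
    simp only [Polynomial.finset_sum_coeff, Polynomial.coeff_C_mul, Polynomial.coeff_X_pow,
      mul_ite, mul_one, mul_zero, apply_ite (fun p : Polynomial ℝ => p.coeff a),
      Polynomial.coeff_zero]
    have hcong : ∀ x ∈ D.support,
        (if b = x.2 then if a = x.1 then D x else 0 else 0)
        = if x = (a, b) then D (a, b) else 0 := by
      intro x hx
      obtain ⟨x1, x2⟩ := x
      by_cases hb : b = x2
      · subst hb
        by_cases ha : a = x1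
        · subst ha
          simp
        · have hne : (x1, b) ≠ (a, b) := fun h => ha (by cases h; rfl)
          rw [if_pos rfl, if_neg ha, if_neg hne]
      · have hne : (x1, x2) ≠ (a, b) := fun h => hb (by cases h; rfl)
        rw [if_neg hb, if_neg hne]
    rw [Finset.sum_congr rfl hcong, Finset.sum_ite_eq' D.support (a, b) (fun _ => D (a, b))]
    by_cases hmem : (a, b) ∈ D.support
    · simp [hmem]
    · simp [hmem, Finsupp.notMem_support_iff.1 hmem]
  rw [hP0] at h1
  simp only [Polynomial.coeff_zero] at h1
  simp [← h1]
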